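/- arXiv:0901.0682 — 2 statements merged into one kernel-verified Lean document; each statement's English description precedes it below -/
import Mathlib

section
/- Let x ∈ K_n = K(π_n) where π_n^{p^n} = π is a uniformizer of K. Suppose that for every σ ∈ Gal(K̄/K) one has v(σx - x) ≥ A. Then for every m with 0 ≤ m ≤ n there exists y_m ∈ K_m such that v(x - y_m) ≥ A - 1/(p^m (p-1)). -/
/-!
Write `x = ∑_{i < p^n} c_i π_n^i` with `c_i ∈ K`. The monomials `c π_n^i` (`c ≠ 0`, `i < p^n`)
have pairwise distinct valuations, since `v(c π_n^i) ≡ i/(e p^n)` modulo `(1/e)ℤ`. Hence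
`X^(p^n) - π` is the minimal polynomial of `π_n`, and some `σ ∈ G` sends `π_n` to `ζ π_n` for a
primitive `p^n`-th root of unity `ζ`. The terms `c_i π_n^i (ζ^i - 1)` of `σ x - x` again have
pairwise distinct valuations, because `v(ζ^i - 1) = p^(t+1)/(p^n (p-1))` when `p^t ∥ i`, so each
of them has valuation `≥ A`. Take `y_m = ∑_{p^(n-m) ∣ i} c_i π_n^i ∈ K_m`: every term of `x - y_m`
has `p^(n-m) ∤ i`, hence `v(ζ^i - 1) ≤ 1/(p^m (p-1))` and `v(c_i π_n^i) ≥ A - 1/(p^m (p-1))`.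
-/

open Polynomial Finset

theorem eq_of_intCast_mul_add_eq {N i j : ℕ} {k l : ℤ} (hi : i < N) (hj : j < N)
    (h : k * N + i = l * N + j) : i = j := by
  have h := congrArg (· % (N : ℤ)) h
  simp only [add_comm (k * _), add_comm (l * _), Int.add_mul_emod_self_right] at h
  rwa [Int.emod_eq_of_lt (by positivity) (by exact_mod_cast hi),
    Int.emod_eq_of_lt (by positivity) (by exact_mod_cast hj), Nat.cast_inj] at h

theorem padicValNat_lt_of_lt_pow {p n i : ℕ} [Fact p.Prime] (hi0 : i ≠ 0) (hi : i < p ^ n) :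
    padicValNat p i < n :=
  (padicValNat_le_nat_log i).trans_lt (Nat.log_lt_of_lt_pow hi0 hi)

-- Scaled by `e p^n (p-1)`, the two sides are `v(c π_n^i (ζ^i - 1))` and `v(c' π_n^j (ζ^j - 1))`
-- for `v c = k/e`, `v c' = l/e`.
theorem eq_of_mul_sub_one_add_pow_padicValNat_eq {p n e i j : ℕ} [Fact p.Prime] {k l : ℤ}
    (hi0 : i ≠ 0) (hj0 : j ≠ 0) (hi : i < p ^ n) (hj : j < p ^ n)
    (h : (k * p ^ n + i) * (p - 1) + e * p ^ (padicValNat p i + 1)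
      = (l * p ^ n + j) * (p - 1) + e * p ^ (padicValNat p j + 1)) : i = j := by
  wlog hij : padicValNat p i ≤ padicValNat p j generalizing i j k l
  · exact (this hj0 hi0 hj hi h.symm (le_of_not_ge hij)).symm
  have hp : p.Prime := Fact.out
  have hp1 : (p - 1 : ℤ) ≠ 0 := sub_ne_zero.mpr (by exact_mod_cast hp.one_lt.ne')
  rcases hij.eq_or_lt with hij | hij
  · rw [hij, add_left_inj] at h
    exact eq_of_intCast_mul_add_eq hi hj (mul_right_cancel₀ hp1 h)
  exfalso
  set t := padicValNat p i
  have htn : t + 1 ≤ n := padicValNat_lt_of_lt_pow hi0 hi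
  have hdvd : (p : ℤ) ^ (t + 1) ∣ i * (p - 1) := by
    have hN : (p : ℤ) ^ (t + 1) ∣ (p : ℤ) ^ n := pow_dvd_pow _ htn
    have hj : (p : ℤ) ^ (t + 1) ∣ j := Int.natCast_dvd_natCast.mpr
      ((pow_dvd_pow p hij).trans pow_padicValNat_dvd)
    have hpj : (p : ℤ) ^ (t + 1) ∣ (p : ℤ) ^ (padicValNat p j + 1) := pow_dvd_pow _ (by omega)
    have : (i : ℤ) * (p - 1) = ((l - k) * p ^ n + j) * (p - 1)
        + e * p ^ (padicValNat p j + 1) - e * p ^ (t + 1) := by linear_combination h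
    rw [this]
    exact (((hN.mul_left _).add hj).mul_right _ |>.add (hpj.mul_left _)).sub (dvd_mul_left _ _)
  have hpZ : Prime (p : ℤ) := Nat.prime_iff_prime_int.mp hp
  have hndvd : ¬ (p : ℤ) ∣ p - 1 := fun h => hpZ.not_dvd_one ((dvd_sub_right dvd_rfl).mp h)
  exact pow_succ_padicValNat_not_dvd hi0
    (Int.natCast_dvd_natCast.mp (by exact_mod_cast hpZ.pow_dvd_of_dvd_mul_right _ hndvd hdvd))

theorem pow_pow_eq_of_pow_succ_eq {M : Type*} [Monoid M] {f : ℕ → M} {p : ℕ}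
    (h : ∀ k, f (k + 1) ^ p = f k) (m k : ℕ) : f (m + k) ^ p ^ k = f m := by
  induction k with
  | zero => simp
  | succ k ih => rw [← add_assoc, pow_succ', pow_mul, h, ih]

open IntermediateField in
theorem exists_aeval_eq_of_mem_adjoin_simple {K L : Type*} [Field K] [Field L] [Algebra K L]
    {x z : L} (hz : IsIntegral K z) (hx : x ∈ K⟮z⟯) :
    ∃ g : K[X], g.natDegree < (minpoly K z).natDegree ∧ aeval z g = x := by
  obtain ⟨g, hg, hgx⟩ := (adjoin.powerBasis hz).exists_eq_aeval ⟨x, hx⟩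
  refine ⟨g, by simpa using hg, ?_⟩
  have := congrArg (algebraMap K⟮z⟯ L) hgx
  rwa [adjoin.powerBasis_gen, ← aeval_algebraMap_apply, AdjoinSimple.algebraMap_gen,
    eq_comm] at this

theorem algEquiv_aeval_sub_aeval {K L : Type*} [Field K] [Field L] [Algebra K L] {z ζ : L}
    (σ : L ≃ₐ[K] L) (hσ : σ z = ζ * z) {g : K[X]} {N : ℕ} (hg : g.natDegree < N) :
    σ (aeval z g) - aeval z g
      = ∑ i ∈ range N, algebraMap K L (g.coeff i) * z ^ i * (ζ ^ i - 1) := by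
  rw [← aeval_algHom_apply, hσ, aeval_eq_sum_range' hg, aeval_eq_sum_range' hg,
    ← sum_sub_distrib]
  refine sum_congr rfl fun i _ => ?_
  rw [Algebra.smul_def, Algebra.smul_def]
  ring

structure IsERealValuation {L : Type*} [Field L] (v : L → EReal) : Prop where
  map_zero : v 0 = ⊤
  ne_top : ∀ x, x ≠ 0 → v x ≠ ⊤
  ne_bot : ∀ x, v x ≠ ⊥
  map_mul : ∀ x y, v (x * y) = v x + v y
  min_le_map_add : ∀ x y, min (v x) (v y) ≤ v (x + y)

namespace IsERealValuation

section Valuation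

variable {L : Type*} [Field L] {v : L → EReal}

theorem exists_eq_coe (hv : IsERealValuation v) {x : L} (hx : x ≠ 0) : ∃ r : ℝ, v x = r :=
  ⟨(v x).toReal, (EReal.coe_toReal (hv.ne_top x hx) (hv.ne_bot x)).symm⟩

theorem eq_zero_of_map_eq_top (hv : IsERealValuation v) {x : L} (hx : v x = ⊤) : x = 0 :=
  by_contra fun h => hv.ne_top x h hx

theorem map_one (hv : IsERealValuation v) : v 1 = 0 := by
  obtain ⟨r, hr⟩ := hv.exists_eq_coe (one_ne_zero (α := L))
  have h := hv.map_mul 1 1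
  rw [one_mul, hr, ← EReal.coe_add, EReal.coe_eq_coe_iff] at h
  rw [hr, show r = 0 by linarith]
  rfl

theorem map_pow (hv : IsERealValuation v) {x : L} {r : ℝ} (hx : v x = r) (k : ℕ) :
    v (x ^ k) = (k * r : ℝ) := by
  induction k with
  | zero => simp [hv.map_one]
  | succ k ih =>
    rw [pow_succ, hv.map_mul, ih, hx, ← EReal.coe_add, EReal.coe_eq_coe_iff]
    push_cast
    ring

theorem map_eq_div_of_pow_eq (hv : IsERealValuation v) {z w : L} {N : ℕ} {r : ℝ} (hN : N ≠ 0)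
    (hz : z ^ N = w) (hw : v w = r) : v z = (r / N : ℝ) := by
  have hz0 : z ≠ 0 := by
    rintro rfl
    rw [zero_pow hN] at hz
    exact EReal.coe_ne_top r (by rw [← hw, ← hz, hv.map_zero])
  obtain ⟨s, hs⟩ := hv.exists_eq_coe hz0
  have h := hv.map_pow hs N
  rw [hz, hw, EReal.coe_eq_coe_iff] at h
  rw [hs, h, mul_div_cancel_left₀ _ (Nat.cast_ne_zero.mpr hN)]

theorem map_eq_zero_of_pow_eq_one (hv : IsERealValuation v) {η : L} {N : ℕ} (hN : N ≠ 0)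
    (h : η ^ N = 1) : v η = 0 := by
  have h := hv.map_eq_div_of_pow_eq hN h (r := 0) (by rw [hv.map_one]; rfl)
  rw [h, zero_div]; rfl

theorem map_neg (hv : IsERealValuation v) (x : L) : v (-x) = v x := by
  rw [neg_eq_neg_one_mul, hv.map_mul, hv.map_eq_zero_of_pow_eq_one two_ne_zero (by norm_num),
    zero_add]

theorem map_sub_comm (hv : IsERealValuation v) (x y : L) : v (x - y) = v (y - x) := by
  rw [← neg_sub, hv.map_neg]

theorem map_add_of_ne (hv : IsERealValuation v) {x y : L} (h : v x ≠ v y) :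
    v (x + y) = min (v x) (v y) := by
  wlog hxy : v x < v y generalizing x y
  · rw [add_comm, min_comm]
    exact this h.symm ((not_lt.mp hxy).lt_of_ne h.symm)
  refine le_antisymm ?_ (hv.min_le_map_add x y)
  have h' := hv.min_le_map_add (x + y) (-y)
  rw [add_neg_cancel_right, hv.map_neg] at h'
  rw [min_eq_left hxy.le]
  by_contra! hlt
  exact (lt_min hlt hxy).not_ge h'

theorem le_map_sum (hv : IsERealValuation v) {ι : Type*} {s : Finset ι} {t : ι → L} {b : EReal}
    (h : ∀ i ∈ s, b ≤ v (t i)) : b ≤ v (∑ i ∈ s, t i) := by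
  classical
  induction s using Finset.induction_on with
  | empty => simp [hv.map_zero]
  | insert a s has ih =>
    rw [sum_insert has]
    exact (le_min (h a (mem_insert_self a s)) (ih fun i hi => h i (mem_insert_of_mem hi))).trans
      (hv.min_le_map_add _ _)

theorem map_prod (hv : IsERealValuation v) {ι : Type*} (s : Finset ι) (t : ι → L) :
    v (∏ i ∈ s, t i) = ∑ i ∈ s, v (t i) := by
  classical
  induction s using Finset.induction_on with
  | empty => simp [hv.map_one]
  | insert a s has ih => rw [prod_insert has, sum_insert has, hv.map_mul, ih]

theorem map_sum_eq_inf (hv : IsERealValuation v) {ι : Type*} {s : Finset ι} {t : ι → L}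
    (hinj : ∀ i ∈ s, ∀ j ∈ s, t i ≠ 0 → t j ≠ 0 → v (t i) = v (t j) → i = j) :
    v (∑ i ∈ s, t i) = s.inf fun i => v (t i) := by
  classical
  induction s using Finset.induction_on with
  | empty => simp [hv.map_zero]
  | insert a s has ih =>
    have ih := ih fun i hi j hj => hinj i (mem_insert_of_mem hi) j (mem_insert_of_mem hj)
    rw [sum_insert has, inf_insert, ← ih]
    by_cases hne : v (t a) = v (∑ i ∈ s, t i)
    swap
    · exact hv.map_add_of_ne hne
    by_cases ha : t a = 0
    · rw [ha, hv.map_zero] at hne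
      rw [ha, hv.eq_zero_of_map_eq_top hne.symm, add_zero, hv.map_zero, min_self]
    exfalso
    rw [ih] at hne
    have hs : s.Nonempty := nonempty_iff_ne_empty.mpr fun h => hv.ne_top _ ha (by simp [hne, h])
    obtain ⟨j, hj, hjinf⟩ := s.exists_mem_eq_inf hs fun i => v (t i)
    have htj : t j ≠ 0 := fun h0 => hv.ne_top _ ha (by rw [hne, hjinf, h0, hv.map_zero])
    exact has (hinj a (mem_insert_self a s) j (mem_insert_of_mem hj) ha htj
      (hne.trans hjinf) ▸ hj)

theorem map_one_sub_le_map_one_sub_pow (hv : IsERealValuation v) {η : L} (hη : v η = 0)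
    (a : ℕ) : v (1 - η) ≤ v (1 - η ^ a) := by
  rw [← mul_neg_geom_sum, hv.map_mul]
  refine le_add_of_nonneg_right (hv.le_map_sum fun j _ => ?_)
  rw [hv.map_pow (r := 0) hη, mul_zero]
  rfl

theorem map_one_sub_eq_of_isPrimitiveRoot (hv : IsERealValuation v) {μ ν : L} {N : ℕ}
    [NeZero N] (hμ : IsPrimitiveRoot μ N) (hν : IsPrimitiveRoot ν N) : v (1 - μ) = v (1 - ν) := by
  have key {μ ν : L} (hμ : IsPrimitiveRoot μ N) (hν : IsPrimitiveRoot ν N) :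
      v (1 - μ) ≤ v (1 - ν) := by
    obtain ⟨a, -, rfl⟩ := hμ.eq_pow_of_pow_eq_one hν.pow_eq_one
    exact hv.map_one_sub_le_map_one_sub_pow
      (hv.map_eq_zero_of_pow_eq_one (NeZero.ne N) hμ.pow_eq_one) a
  exact le_antisymm (key hμ hν) (key hν hμ)

-- The `1 - μ`, `μ` primitive, all have the same valuation, and their product is
-- `Φ_{p^(s+1)}(1) = p`.
theorem map_one_sub_of_isPrimitiveRoot_prime_pow (hv : IsERealValuation v) {p : ℕ}
    [Fact p.Prime] (hvp : v p = 1) {ξ : L} {s : ℕ} (hξ : IsPrimitiveRoot ξ (p ^ (s + 1))) :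
    v (1 - ξ) = ((p ^ s * (p - 1) : ℝ)⁻¹ : ℝ) := by
  have hp : p.Prime := Fact.out
  have hprod : ∏ μ ∈ primitiveRoots (p ^ (s + 1)) L, (1 - μ) = p := by
    simpa [eval_prod] using
      (congrArg (eval 1) (cyclotomic_eq_prod_X_sub_primitiveRoots hξ)).symm
  obtain ⟨r, hr⟩ := hv.exists_eq_coe (sub_ne_zero.mpr (hξ.ne_one (Nat.one_lt_pow
    s.succ_ne_zero hp.one_lt)).symm)
  have hconst : ∀ μ ∈ primitiveRoots (p ^ (s + 1)) L, v (1 - μ) = r := fun μ hμ => by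
    rw [← hr, hv.map_one_sub_eq_of_isPrimitiveRoot
      ((mem_primitiveRoots (Nat.pos_of_neZero _)).mp hμ) hξ]
  have hcard : ((primitiveRoots (p ^ (s + 1)) L).card : ℝ) = p ^ s * (p - 1) := by
    rw [hξ.card_primitiveRoots, Nat.totient_prime_pow_succ hp]
    push_cast [Nat.cast_sub hp.one_le]
    ring
  have h := hv.map_prod (primitiveRoots (p ^ (s + 1)) L) (1 - ·)
  rw [hprod, hvp, sum_congr rfl hconst, sum_const, ← EReal.coe_nsmul, nsmul_eq_mul, hcard,
    ← EReal.coe_one, EReal.coe_eq_coe_iff] at h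
  rw [hr, eq_inv_of_mul_eq_one_right h.symm]

theorem map_pow_sub_one_of_isPrimitiveRoot (hv : IsERealValuation v) {p n : ℕ} [Fact p.Prime]
    (hvp : v p = 1) {ζ : L} (hζ : IsPrimitiveRoot ζ (p ^ n)) {i : ℕ} (hi0 : i ≠ 0)
    (hi : i < p ^ n) :
    v (ζ ^ i - 1) = ((p ^ (padicValNat p i + 1) / (p ^ n * (p - 1)) : ℝ) : EReal) := by
  have hp : p.Prime := Fact.out
  have htn := padicValNat_lt_of_lt_pow hi0 hi
  have hndvd := pow_succ_padicValNat_not_dvd (p := p) hi0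
  obtain ⟨c, hci⟩ : p ^ padicValNat p i ∣ i := pow_padicValNat_dvd
  generalize padicValNat p i = t at *
  subst hci
  obtain ⟨s, rfl⟩ : ∃ s, n = t + (s + 1) := ⟨n - t - 1, by omega⟩
  have hc : c.Coprime p := (Nat.coprime_comm.mp <| hp.coprime_iff_not_dvd.mpr fun ⟨d, hd⟩ =>
    hndvd ⟨d, by rw [hd, pow_succ]; ring⟩)
  have hζt : IsPrimitiveRoot (ζ ^ p ^ t) (p ^ (s + 1)) := by
    simpa [pow_add, hp.pos.ne'] using hζ.pow_of_dvd (pow_ne_zero t hp.ne_zero) (pow_dvd_pow p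
      (Nat.le_add_right t (s + 1)))
  rw [pow_mul, hv.map_sub_comm, hv.map_one_sub_of_isPrimitiveRoot_prime_pow hvp
    (hζt.pow_of_coprime c (hc.pow_right _))]
  have hp0 : (p : ℝ) ≠ 0 := by exact_mod_cast hp.ne_zero
  have hp1 : (p - 1 : ℝ) ≠ 0 := sub_ne_zero.mpr (by exact_mod_cast hp.one_lt.ne')
  congr 1
  field_simp
  ring

theorem map_pow_sub_one_le_of_not_dvd (hv : IsERealValuation v) {p n m : ℕ} [Fact p.Prime]
    (hvp : v p = 1) {ζ : L} (hζ : IsPrimitiveRoot ζ (p ^ n)) (hm : m ≤ n) {i : ℕ}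
    (hi : i < p ^ n) (hdvd : ¬ p ^ (n - m) ∣ i) :
    v (ζ ^ i - 1) ≤ ((1 / (p ^ m * (p - 1)) : ℝ) : EReal) := by
  have hp : p.Prime := Fact.out
  have hi0 : i ≠ 0 := by rintro rfl; exact hdvd (dvd_zero _)
  have htm : padicValNat p i + 1 + m ≤ n := by
    by_contra! h
    exact hdvd ((pow_dvd_pow p (by omega)).trans pow_padicValNat_dvd)
  have hp1 : (1 : ℝ) < p := by exact_mod_cast hp.one_lt
  have hp1' : (0 : ℝ) < p - 1 := by linarith
  have hp0 : (0 : ℝ) < p := by linarith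
  have hpow : (p : ℝ) ^ (padicValNat p i + 1) * p ^ m ≤ p ^ n := by
    rw [← pow_add]
    exact pow_le_pow_right₀ hp1.le htm
  rw [hv.map_pow_sub_one_of_isPrimitiveRoot hvp hζ hi0 hi, EReal.coe_le_coe_iff,
    div_le_div_iff₀ (by positivity) (by positivity)]
  nlinarith

end Valuation

section Kummer

variable {K L : Type*} [Field K] [Field L] [Algebra K L] {v : L → EReal} {e N p n : ℕ}
  [Fact p.Prime] {z ζ : L}

theorem map_eq_inv_of_pow_eq (hv : IsERealValuation v) (hN : N ≠ 0) {π : K}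
    (hπ : v (algebraMap K L π) = ((e : ℝ)⁻¹ : ℝ)) (hz : z ^ N = algebraMap K L π) :
    v z = ((e * N : ℝ)⁻¹ : ℝ) := by
  rw [hv.map_eq_div_of_pow_eq hN hz hπ, mul_inv, div_eq_mul_inv]

theorem exists_map_algebraMap_mul_pow (hv : IsERealValuation v) (he : e ≠ 0) (hN : N ≠ 0)
    (hdisc : ∀ c : K, c ≠ 0 → ∃ k : ℤ, v (algebraMap K L c) = ((k / e : ℝ) : EReal))
    (hz : v z = ((e * N : ℝ)⁻¹ : ℝ)) {c : K} (hc : c ≠ 0) (i : ℕ) :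
    ∃ k : ℤ, v (algebraMap K L c * z ^ i) = (((k * N + i : ℤ) / (e * N) : ℝ) : EReal) := by
  obtain ⟨k, hk⟩ := hdisc c hc
  refine ⟨k, ?_⟩
  rw [hv.map_mul, hk, hv.map_pow hz, ← EReal.coe_add, EReal.coe_eq_coe_iff]
  field_simp
  push_cast
  ring

theorem eq_of_map_algebraMap_mul_pow_eq (hv : IsERealValuation v) (he : e ≠ 0) (hN : N ≠ 0)
    (hdisc : ∀ c : K, c ≠ 0 → ∃ k : ℤ, v (algebraMap K L c) = ((k / e : ℝ) : EReal))
    (hz : v z = ((e * N : ℝ)⁻¹ : ℝ)) {c c' : K} (hc : c ≠ 0) (hc' : c' ≠ 0) {i j : ℕ}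
    (hi : i < N) (hj : j < N)
    (h : v (algebraMap K L c * z ^ i) = v (algebraMap K L c' * z ^ j)) : i = j := by
  obtain ⟨k, hk⟩ := hv.exists_map_algebraMap_mul_pow he hN hdisc hz hc i
  obtain ⟨l, hl⟩ := hv.exists_map_algebraMap_mul_pow he hN hdisc hz hc' j
  rw [hk, hl, EReal.coe_eq_coe_iff, div_left_inj' (by positivity), Int.cast_inj] at h
  exact eq_of_intCast_mul_add_eq hi hj h

theorem eq_zero_of_aeval_eq_zero (hv : IsERealValuation v) (he : e ≠ 0) (hN : N ≠ 0)
    (hdisc : ∀ c : K, c ≠ 0 → ∃ k : ℤ, v (algebraMap K L c) = ((k / e : ℝ) : EReal))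
    (hz : v z = ((e * N : ℝ)⁻¹ : ℝ)) {g : K[X]} (hg : g.natDegree < N) (h : aeval z g = 0) :
    g = 0 := by
  have hz0 : z ≠ 0 := fun h0 => by
    rw [h0, hv.map_zero] at hz
    exact EReal.coe_ne_top _ hz.symm
  have hcoeff {i : ℕ} (h : algebraMap K L (g.coeff i) * z ^ i ≠ 0) : g.coeff i ≠ 0 :=
    fun h0 => h (by simp [h0])
  rw [aeval_eq_sum_range' hg] at h
  simp only [Algebra.smul_def] at h
  have hinf := hv.map_sum_eq_inf fun i hi j hj hti htj hij =>
    hv.eq_of_map_algebraMap_mul_pow_eq he hN hdisc hz (hcoeff hti) (hcoeff htj)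
      (mem_range.mp hi) (mem_range.mp hj) hij
  rw [h, hv.map_zero, eq_comm, Finset.inf_eq_top_iff] at hinf
  ext i
  rcases lt_or_ge i N with hi | hi
  · simpa [hz0] using hv.eq_zero_of_map_eq_top (hinf i (mem_range.mpr hi))
  · exact coeff_eq_zero_of_natDegree_lt (hg.trans_le hi)

theorem minpoly_eq_X_pow_sub_C (hv : IsERealValuation v) (he : e ≠ 0) (hN : N ≠ 0)
    (hdisc : ∀ c : K, c ≠ 0 → ∃ k : ℤ, v (algebraMap K L c) = ((k / e : ℝ) : EReal))
    {π : K} (hπ : v (algebraMap K L π) = ((e : ℝ)⁻¹ : ℝ)) (hz : z ^ N = algebraMap K L π) :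
    minpoly K z = X ^ N - C π := by
  have hmonic : (X ^ N - C π).Monic := monic_X_pow_sub_C π hN
  have hroot : aeval z (X ^ N - C π) = 0 := by simp [hz]
  have hint : IsIntegral K z := ⟨_, hmonic, hroot⟩
  refine (eq_of_monic_of_dvd_of_natDegree_le (minpoly.monic hint) hmonic
    (minpoly.dvd K z hroot) ?_).symm
  rw [natDegree_X_pow_sub_C]
  by_contra! hlt
  exact minpoly.ne_zero hint (hv.eq_zero_of_aeval_eq_zero he hN hdisc
    (hv.map_eq_inv_of_pow_eq hN hπ hz) hlt (minpoly.aeval K z))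

theorem exists_algEquiv_apply_eq_mul [Normal K L] (hv : IsERealValuation v)
    (he : e ≠ 0) (hN : N ≠ 0)
    (hdisc : ∀ c : K, c ≠ 0 → ∃ k : ℤ, v (algebraMap K L c) = ((k / e : ℝ) : EReal))
    {π : K} (hπ : v (algebraMap K L π) = ((e : ℝ)⁻¹ : ℝ)) (hz : z ^ N = algebraMap K L π)
    {ζ : L} (hζ : ζ ^ N = 1) : ∃ σ : L ≃ₐ[K] L, σ z = ζ * z :=
  IsConjRoot.exists_algEquiv <| isConjRoot_def.mpr <| by
    rw [hv.minpoly_eq_X_pow_sub_C he hN hdisc hπ (by rw [mul_pow, hζ, one_mul, hz]),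
      hv.minpoly_eq_X_pow_sub_C he hN hdisc hπ hz]

theorem exists_map_algebraMap_mul_pow_mul_pow_sub_one (hv : IsERealValuation v)
    (hvp : v p = 1) (he : e ≠ 0)
    (hdisc : ∀ c : K, c ≠ 0 → ∃ k : ℤ, v (algebraMap K L c) = ((k / e : ℝ) : EReal))
    (hz : v z = ((e * p ^ n : ℝ)⁻¹ : ℝ)) (hζ : IsPrimitiveRoot ζ (p ^ n)) {c : K} (hc : c ≠ 0)
    {i : ℕ} (hi0 : i ≠ 0) (hi : i < p ^ n) :
    ∃ k : ℤ, v (algebraMap K L c * z ^ i * (ζ ^ i - 1)) =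
      (((((k * p ^ n + i) * (p - 1) + e * p ^ (padicValNat p i + 1) : ℤ) : ℝ)
        / (e * p ^ n * (p - 1)) : ℝ) : EReal) := by
  have hp : p.Prime := Fact.out
  obtain ⟨k, hk⟩ := hv.exists_map_algebraMap_mul_pow he (pow_ne_zero n hp.ne_zero) hdisc
    (by rwa [Nat.cast_pow]) hc i
  refine ⟨k, ?_⟩
  have hp1 : (p - 1 : ℝ) ≠ 0 := sub_ne_zero.mpr (by exact_mod_cast hp.one_lt.ne')
  have hp0 : (p : ℝ) ≠ 0 := by exact_mod_cast hp.ne_zero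
  rw [hv.map_mul, hk, hv.map_pow_sub_one_of_isPrimitiveRoot hvp hζ hi0 hi, ← EReal.coe_add,
    EReal.coe_eq_coe_iff]
  field_simp
  push_cast
  ring

theorem le_map_of_le_map_sum_pow_sub_one (hv : IsERealValuation v)
    (hvp : v p = 1) (he : e ≠ 0)
    (hdisc : ∀ c : K, c ≠ 0 → ∃ k : ℤ, v (algebraMap K L c) = ((k / e : ℝ) : EReal))
    (hz : v z = ((e * p ^ n : ℝ)⁻¹ : ℝ)) (hζ : IsPrimitiveRoot ζ (p ^ n)) {c : ℕ → K}
    {A : EReal} (hA : A ≤ v (∑ i ∈ range (p ^ n), algebraMap K L (c i) * z ^ i * (ζ ^ i - 1)))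
    {i : ℕ} (hi : i < p ^ n) : A ≤ v (algebraMap K L (c i) * z ^ i * (ζ ^ i - 1)) := by
  have hp : p.Prime := Fact.out
  have hp1 : (p - 1 : ℝ) ≠ 0 := sub_ne_zero.mpr (by exact_mod_cast hp.one_lt.ne')
  have hne {i : ℕ} (h : algebraMap K L (c i) * z ^ i * (ζ ^ i - 1) ≠ 0) : c i ≠ 0 ∧ i ≠ 0 :=
    ⟨fun h0 => h (by simp [h0]), by rintro rfl; simp at h⟩
  refine Finset.le_inf_iff.mp (hA.trans_eq (hv.map_sum_eq_inf ?_)) i (mem_range.mpr hi)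
  intro i hi j hj hti htj hij
  obtain ⟨k, hk⟩ := hv.exists_map_algebraMap_mul_pow_mul_pow_sub_one hvp he hdisc hz hζ
    (hne hti).1 (hne hti).2 (mem_range.mp hi)
  obtain ⟨l, hl⟩ := hv.exists_map_algebraMap_mul_pow_mul_pow_sub_one hvp he hdisc hz hζ
    (hne htj).1 (hne htj).2 (mem_range.mp hj)
  rw [hk, hl, EReal.coe_eq_coe_iff, div_left_inj' (mul_ne_zero (mul_ne_zero
    (Nat.cast_ne_zero.mpr he) (pow_ne_zero _ (Nat.cast_ne_zero.mpr hp.ne_zero))) hp1),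
    Int.cast_inj] at hij
  exact eq_of_mul_sub_one_add_pow_padicValNat_eq (hne hti).2 (hne htj).2 (mem_range.mp hi)
    (mem_range.mp hj) hij

theorem le_map_aeval_sub_sum_filter_dvd (hv : IsERealValuation v)
    (hvp : v p = 1) (he : e ≠ 0)
    (hdisc : ∀ c : K, c ≠ 0 → ∃ k : ℤ, v (algebraMap K L c) = ((k / e : ℝ) : EReal))
    (hz : v z = ((e * p ^ n : ℝ)⁻¹ : ℝ)) (hζ : IsPrimitiveRoot ζ (p ^ n)) (σ : L ≃ₐ[K] L)
    (hσ : σ z = ζ * z) {g : K[X]} (hg : g.natDegree < p ^ n) {A : ℝ}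
    (hA : (A : EReal) ≤ v (σ (aeval z g) - aeval z g)) {m : ℕ} (hm : m ≤ n) :
    ((A - 1 / (p ^ m * (p - 1)) : ℝ) : EReal) ≤ v (aeval z g -
      ∑ i ∈ range (p ^ n) with p ^ (n - m) ∣ i, algebraMap K L (g.coeff i) * z ^ i) := by
  have hp : p.Prime := Fact.out
  rw [algEquiv_aeval_sub_aeval σ hσ hg] at hA
  rw [aeval_eq_sum_range' hg, ← sum_filter_add_sum_filter_not _ (p ^ (n - m) ∣ ·)]
  simp only [Algebra.smul_def, add_sub_cancel_left]
  refine hv.le_map_sum fun i hi => ?_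
  obtain ⟨hi, hdvd⟩ := mem_filter.mp hi
  rcases eq_or_ne (g.coeff i) 0 with h0 | h0
  · simp [h0, hv.map_zero]
  have hAi := hv.le_map_of_le_map_sum_pow_sub_one hvp he hdisc hz hζ hA (mem_range.mp hi)
  obtain ⟨k, hk⟩ := hv.exists_map_algebraMap_mul_pow he (pow_ne_zero n hp.ne_zero) hdisc
    (by rwa [Nat.cast_pow]) h0 i
  rw [hv.map_mul] at hAi
  have hle := hAi.trans (add_le_add le_rfl (hv.map_pow_sub_one_le_of_not_dvd hvp hζ hm
    (mem_range.mp hi) hdvd))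
  rw [hk, ← EReal.coe_add, EReal.coe_le_coe_iff] at hle
  rw [hk, EReal.coe_le_coe_iff]
  linarith

end Kummer

end IsERealValuation

/-- Setting: `K` finite totally ramified over `Frac W(k)` with index `e`, encoded by a
valuation `v` on an algebraic closure of `K` with `v p = 1`, `v π = 1/e`, `v(K^×) = (1/e)ℤ`;
`π_0 = π`, `π_{m+1}^p = π_m`, `K_m = K(π_m)`.  If `x ∈ K_n` satisfies
`v (σ x - x) ≥ A` for all `σ ∈ Gal(K̄/K)`, then for every `0 ≤ m ≤ n` there is
`y_m ∈ K_m` with `v (x - y_m) ≥ A - 1/(p^m (p-1))`. -/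
theorem stmt4 (p : ℕ) [Fact p.Prime] (K : Type) [Field K] [CharZero K]
    (e : ℕ) (he : 0 < e)
    (v : AlgebraicClosure K → EReal)
    (hv0 : v 0 = ⊤)
    (hvfin : ∀ x : AlgebraicClosure K, x ≠ 0 → v x ≠ ⊤)
    (hvbot : ∀ x : AlgebraicClosure K, v x ≠ ⊥)
    (hvmul : ∀ x y : AlgebraicClosure K, v (x * y) = v x + v y)
    (hvadd : ∀ x y : AlgebraicClosure K, min (v x) (v y) ≤ v (x + y))
    (hvp : v ((p : ℕ) : AlgebraicClosure K) = 1)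
    (π : K)
    (hπ : v (algebraMap K (AlgebraicClosure K) π) = (((e : ℝ)⁻¹ : ℝ) : EReal))
    (hdisc : ∀ y : K, y ≠ 0 →
      ∃ m : ℤ, v (algebraMap K (AlgebraicClosure K) y) = (((m : ℝ) / e : ℝ) : EReal))
    (πs : ℕ → AlgebraicClosure K)
    (hπ0 : πs 0 = algebraMap K (AlgebraicClosure K) π)
    (hπs : ∀ m, πs (m + 1) ^ p = πs m)
    (n : ℕ) (x : AlgebraicClosure K) (hx : x ∈ IntermediateField.adjoin K {πs n})
    (A : ℝ)
    (hGal : ∀ σ : AlgebraicClosure K ≃ₐ[K] AlgebraicClosure K,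
      (A : EReal) ≤ v (σ x - x)) :
    ∀ m : ℕ, m ≤ n → ∃ y ∈ IntermediateField.adjoin K {πs m},
      (((A - 1 / (p ^ m * ((p : ℝ) - 1))) : ℝ) : EReal) ≤ v (x - y) := by
  intro m hm
  have hp : p.Prime := Fact.out
  have hv : IsERealValuation v := ⟨hv0, hvfin, hvbot, hvmul, hvadd⟩
  have hpn : p ^ n ≠ 0 := pow_ne_zero n hp.ne_zero
  have hz : πs n ^ p ^ n = algebraMap K (AlgebraicClosure K) π := by
    simpa [hπ0] using pow_pow_eq_of_pow_succ_eq hπs 0 n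
  have hint : IsIntegral K (πs n) :=
    IsIntegral.of_pow (Nat.pos_of_ne_zero hpn) (hz ▸ isIntegral_algebraMap)
  obtain ⟨g, hg, rfl⟩ := exists_aeval_eq_of_mem_adjoin_simple hint hx
  rw [hv.minpoly_eq_X_pow_sub_C he.ne' hpn hdisc hπ hz, natDegree_X_pow_sub_C] at hg
  have : NeZero (p : K) := ⟨Nat.cast_ne_zero.mpr hp.ne_zero⟩
  obtain ⟨ζ, hζ⟩ := HasEnoughRootsOfUnity.exists_primitiveRoot (AlgebraicClosure K) (p ^ n)
  obtain ⟨σ, hσ⟩ := hv.exists_algEquiv_apply_eq_mul he.ne' hpn hdisc hπ hz hζ.pow_eq_one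
  refine ⟨_, sum_mem fun i hi => ?_, hv.le_map_aeval_sub_sum_filter_dvd hvp he.ne' hdisc
    (by simpa using hv.map_eq_inv_of_pow_eq hpn hπ hz) hζ σ hσ hg (hGal σ) hm⟩
  obtain ⟨a, rfl⟩ := (mem_filter.mp hi).2
  have hnm : πs n ^ p ^ (n - m) = πs m := by
    simpa [Nat.add_sub_cancel' hm] using pow_pow_eq_of_pow_succ_eq hπs m (n - m)
  rw [pow_mul, hnm]
  exact mul_mem (IntermediateField.algebraMap_mem _ _)
    (pow_mem (IntermediateField.mem_adjoin_simple_self K _) a)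
end

section
/- (Sharpness of the Ax constant) Let π_1 be a p-th root of a uniformizer π of K. Then for σ ∈ Gal(K̄/K) one has v(σπ_1 - π_1) ≥ v(π_1) + 1/(p-1), with equality for some σ, while sup_{y ∈ K} v(π_1 - y) = v(π_1). Hence the constant 1/(p-1) in the Ax theorem cannot be improved. -/
/-!
If `σ π₁ ≠ π₁` then `σ π₁ = ζ π₁` for a primitive `p`-th root of unity `ζ`, and
`v (ζ - 1) = 1 / (p - 1)`: the `p - 1` factors of `∏_{0<k<p} (1 - ζ ^ k) = p` all have the same
valuation, since `1 - ζ ^ k` and `1 - ζ` divide each other with quotients that are sums of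
roots of unity. Such a `σ` exists because `v π₁ = 1 / (e p)` is not in `(1 / e) ℤ`, the value
group of `K`, so `π₁ ∉ K`; for the same reason `v (π₁ - y) = min (v π₁) (v y) ≤ v π₁` for
every `y ∈ K`.
-/

theorem WithTop.eq_coe_div_of_nsmul_eq_coe {n : ℕ} (hn : n ≠ 0) {a : WithTop ℝ} {r : ℝ}
    (h : n • a = r) : a = ↑(r / n) := by
  induction a with
  | top =>
    obtain ⟨m, rfl⟩ := Nat.exists_eq_succ_of_ne_zero hn
    simp [succ_nsmul] at h
  | coe a =>
    rw [← WithTop.coe_nsmul, WithTop.coe_eq_coe, nsmul_eq_mul] at h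
    rw [← h, WithTop.coe_eq_coe]
    field_simp

namespace AddValuation

section OfWithBot

variable {R Γ₀ : Type*} [Ring R] [LinearOrderedAddCommMonoidWithTop Γ₀]
  (v : R → WithBot Γ₀)
  (h0 : v 0 = ⊤) (h1 : v 1 = 0) (hbot : ∀ x, v x ≠ ⊥)
  (hmul : ∀ x y, v (x * y) = v x + v y) (hadd : ∀ x y, min (v x) (v y) ≤ v (x + y))

def ofWithBot : AddValuation R Γ₀ :=
  AddValuation.of (fun x ↦ (v x).unbot (hbot x))
    ((WithBot.unbot_eq_iff _).mpr h0) ((WithBot.unbot_eq_iff _).mpr h1)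
    (fun x y ↦ by
      rw [← WithBot.coe_le_coe, WithBot.coe_min, WithBot.coe_unbot, WithBot.coe_unbot,
        WithBot.coe_unbot]
      exact hadd x y)
    (fun x y ↦ by
      rw [WithBot.unbot_eq_iff, WithBot.coe_add, WithBot.coe_unbot, WithBot.coe_unbot]
      exact hmul x y)

theorem coe_ofWithBot (x : R) : (ofWithBot v h0 h1 hbot hmul hadd x : WithBot Γ₀) = v x :=
  WithBot.coe_unbot _ _

end OfWithBot

section CommRing

variable {R Γ₀ : Type*} [CommRing R] [LinearOrderedAddCommMonoidWithTop Γ₀]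
  (v : AddValuation R Γ₀)

theorem map_prod {ι : Type*} (s : Finset ι) (f : ι → R) :
    v (∏ i ∈ s, f i) = ∑ i ∈ s, v (f i) := by
  classical
  induction s using Finset.induction_on with
  | empty => simp
  | insert a s ha ih => rw [Finset.prod_insert ha, Finset.sum_insert ha, map_mul, ih]

theorem map_sub_le_left_of_ne {x y : R} (h : v y ≠ v x) : v (x - y) ≤ v x := by
  rw [sub_eq_add_neg, v.map_add_of_distinct_val (by rwa [map_neg, ne_comm])]
  exact min_le_left _ _

theorem map_one_sub_le_map_one_sub_pow {x : R} (hx : 0 ≤ v x) (n : ℕ) :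
    v (1 - x) ≤ v (1 - x ^ n) := by
  rw [← mul_neg_geom_sum, map_mul]
  refine le_add_of_nonneg_right (v.map_le_sum fun i _ ↦ ?_)
  rw [map_pow]
  exact nsmul_nonneg hx i

theorem map_nonneg_of_pow_eq_one {x : R} {n : ℕ} (hn : n ≠ 0) (hx : x ^ n = 1) : 0 ≤ v x := by
  by_contra! hneg
  obtain ⟨m, rfl⟩ := Nat.exists_eq_succ_of_ne_zero hn
  have : v (x ^ (m + 1)) < 0 := by
    rw [map_pow, succ_nsmul]
    exact (add_le_of_nonpos_left (nsmul_nonpos hneg.le m)).trans_lt hneg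
  simp [hx] at this

end CommRing

section IsDomain

variable {R Γ₀ : Type*} [CommRing R] [IsDomain R] [LinearOrderedAddCommMonoidWithTop Γ₀]
  (v : AddValuation R Γ₀)

theorem map_one_sub_pow_of_isPrimitiveRoot {ζ : R} {n : ℕ} [NeZero n]
    (hζ : IsPrimitiveRoot ζ n) {k : ℕ} (hk : k.Coprime n) : v (1 - ζ ^ k) = v (1 - ζ) := by
  have hv : ∀ {ξ : R}, IsPrimitiveRoot ξ n → 0 ≤ v ξ := fun hξ ↦
    v.map_nonneg_of_pow_eq_one (NeZero.ne n) hξ.pow_eq_one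
  obtain ⟨j, -, hj⟩ := (hζ.pow_of_coprime k hk).eq_pow_of_pow_eq_one hζ.pow_eq_one
  refine le_antisymm ?_ (v.map_one_sub_le_map_one_sub_pow (hv hζ) k)
  calc v (1 - ζ ^ k) ≤ v (1 - (ζ ^ k) ^ j) :=
        v.map_one_sub_le_map_one_sub_pow (hv (hζ.pow_of_coprime k hk)) j
    _ = v (1 - ζ) := by rw [hj]

theorem nsmul_map_sub_one_of_isPrimitiveRoot {p : ℕ} [Fact p.Prime] {ζ : R}
    (hζ : IsPrimitiveRoot ζ p) : (p - 1) • v (ζ - 1) = v p := by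
  have hp := (Fact.out : p.Prime)
  obtain ⟨n, rfl⟩ : ∃ n, p = n + 1 := ⟨p - 1, (Nat.sub_add_cancel hp.one_le).symm⟩
  have hfactor : ∀ k ∈ Finset.range n, v (1 - ζ ^ (k + 1)) = v (1 - ζ) := fun k hk ↦
    v.map_one_sub_pow_of_isPrimitiveRoot hζ <| (Nat.coprime_of_lt_prime k.succ_ne_zero
      (Nat.succ_lt_succ (Finset.mem_range.mp hk)) hp).symm
  rw [Nat.add_sub_cancel, map_sub_swap, Nat.cast_succ, ← hζ.prod_one_sub_pow_eq_order, map_prod,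
    Finset.sum_congr rfl hfactor, Finset.sum_const, Finset.card_range]

theorem map_sub_one_of_isPrimitiveRoot (v : AddValuation R (WithTop ℝ)) {p : ℕ} [Fact p.Prime]
    (hvp : v p = 1) {ζ : R} (hζ : IsPrimitiveRoot ζ p) :
    v (ζ - 1) = ↑(1 / ((p : ℝ) - 1)) := by
  have hp := (Fact.out : p.Prime)
  have h := v.nsmul_map_sub_one_of_isPrimitiveRoot hζ
  rw [hvp, ← WithTop.coe_one] at h
  rw [WithTop.eq_coe_div_of_nsmul_eq_coe (Nat.sub_ne_zero_of_lt hp.one_lt) h,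
    Nat.cast_sub hp.one_le, Nat.cast_one]

end IsDomain

section Field

variable {L : Type*} [Field L] (v : AddValuation L (WithTop ℝ)) {p : ℕ} [Fact p.Prime]

theorem map_sub_of_pow_eq_pow (hvp : v p = 1) {x y : L} (hx : x ≠ 0) (hxy : y ≠ x)
    (h : y ^ p = x ^ p) : v (y - x) = v x + ↑(1 / ((p : ℝ) - 1)) := by
  have hζ : IsPrimitiveRoot (y / x) p := IsPrimitiveRoot.iff_orderOf.mpr <|
    orderOf_eq_prime (by rw [div_pow, h, div_self (pow_ne_zero p hx)])
      (by rwa [ne_eq, div_eq_one_iff_eq hx])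
  rw [← v.map_sub_one_of_isPrimitiveRoot hvp hζ, add_comm, ← map_mul, sub_one_mul,
    div_mul_cancel₀ y hx]

theorem le_map_sub_of_pow_eq_pow (hvp : v p = 1) {x y : L} (hx : x ≠ 0) (h : y ^ p = x ^ p) :
    v x + ↑(1 / ((p : ℝ) - 1)) ≤ v (y - x) := by
  rcases eq_or_ne y x with rfl | hxy
  · simp
  · exact (v.map_sub_of_pow_eq_pow hvp hx hxy h).ge

variable {K : Type*} [Field K] [Algebra K L] {e : ℕ} {π : K} {π₁ : L}

theorem map_algebraMap_ne_of_pow_eq_uniformizer (he : 0 < e)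
    (hπ : v (algebraMap K L π) = ↑((e : ℝ)⁻¹))
    (hdisc : ∀ y : K, y ≠ 0 → ∃ m : ℤ, v (algebraMap K L y) = ↑((m : ℝ) / e))
    (hπ₁ : π₁ ^ p = algebraMap K L π) (y : K) : v (algebraMap K L y) ≠ v π₁ := by
  have hp := (Fact.out : p.Prime)
  have hvπ₁ : v π₁ = ↑((e : ℝ)⁻¹ / p) :=
    WithTop.eq_coe_div_of_nsmul_eq_coe hp.ne_zero (by rw [← map_pow, hπ₁, hπ])
  rcases eq_or_ne y 0 with rfl | hy
  · simp [hvπ₁]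
  obtain ⟨m, hm⟩ := hdisc y hy
  rw [hm, hvπ₁, ne_eq, WithTop.coe_eq_coe]
  intro hme
  have hpm : (p : ℤ) * m = 1 := by
    have he' : (e : ℝ) ≠ 0 := by positivity
    have hp' : (p : ℝ) ≠ 0 := by exact_mod_cast hp.ne_zero
    field_simp at hme
    exact_mod_cast (by linarith : (p : ℝ) * m = 1)
  exact hp.one_lt.ne' (by exact_mod_cast Int.eq_one_of_mul_eq_one_right (by positivity) hpm)

end Field

end AddValuation

theorem stmt7_general (p : ℕ) [Fact p.Prime] (K : Type) [Field K] [CharZero K]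
    (e : ℕ) (he : 0 < e)
    (v : AlgebraicClosure K → EReal)
    (hv0 : v 0 = ⊤)
    (hvbot : ∀ x : AlgebraicClosure K, v x ≠ ⊥)
    (hvmul : ∀ x y : AlgebraicClosure K, v (x * y) = v x + v y)
    (hvadd : ∀ x y : AlgebraicClosure K, min (v x) (v y) ≤ v (x + y))
    (hvp : v ((p : ℕ) : AlgebraicClosure K) = 1)
    (π : K)
    (hπ : v (algebraMap K (AlgebraicClosure K) π) = (((e : ℝ)⁻¹ : ℝ) : EReal))
    (hdisc : ∀ y : K, y ≠ 0 →
      ∃ m : ℤ, v (algebraMap K (AlgebraicClosure K) y) = (((m : ℝ) / e : ℝ) : EReal))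
    (π₁ : AlgebraicClosure K) (hπ₁ : π₁ ^ p = algebraMap K (AlgebraicClosure K) π) :
    (∀ σ : AlgebraicClosure K ≃ₐ[K] AlgebraicClosure K,
        v π₁ + ((1 / ((p : ℝ) - 1) : ℝ) : EReal) ≤ v (σ π₁ - π₁)) ∧
    (∃ σ : AlgebraicClosure K ≃ₐ[K] AlgebraicClosure K,
        v (σ π₁ - π₁) = v π₁ + ((1 / ((p : ℝ) - 1) : ℝ) : EReal)) ∧
    (∀ y : K, v (π₁ - algebraMap K (AlgebraicClosure K) y) ≤ v π₁) ∧
    (∃ y : K, v (π₁ - algebraMap K (AlgebraicClosure K) y) = v π₁) := by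
  have h1 : v 1 = 0 := by
    have h : ((1 : ℝ) : EReal) + v 1 = (1 : ℝ) := by
      simpa [hvp] using (hvmul (p : AlgebraicClosure K) 1).symm
    rw [← EReal.add_sub_cancel_left (a := v 1) (b := 1), h, ← EReal.coe_sub, sub_self,
      EReal.coe_zero]
  -- `EReal` is `WithBot (WithTop ℝ)` by definition.
  let w : AddValuation (AlgebraicClosure K) (WithTop ℝ) := .ofWithBot v hv0 h1 hvbot hvmul hvadd
  have hw (x) : v x = (WithBot.some (w x) : EReal) :=
    (AddValuation.coe_ofWithBot v hv0 h1 hvbot hvmul hvadd x).symm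
  have hvK : ∀ y : K, w (algebraMap K _ y) ≠ w π₁ :=
    w.map_algebraMap_ne_of_pow_eq_uniformizer he (WithBot.coe_inj.mp ((hw _).symm.trans hπ))
      (fun y hy ↦ (hdisc y hy).imp fun m hm ↦ WithBot.coe_inj.mp ((hw _).symm.trans hm)) hπ₁
  have hwp : w p = 1 := WithBot.coe_inj.mp ((hw _).symm.trans hvp)
  have hπ₁0 : π₁ ≠ 0 := by
    rintro rfl
    exact hvK 0 (by simp)
  have hconj (σ : Gal(AlgebraicClosure K/K)) : σ π₁ ^ p = π₁ ^ p := by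
    rw [← map_pow, hπ₁, AlgEquiv.commutes]
  obtain ⟨σ, hσ⟩ : ∃ σ : Gal(AlgebraicClosure K/K), σ π₁ ≠ π₁ := by
    by_contra! h
    obtain ⟨y, rfl⟩ := (InfiniteGalois.mem_range_algebraMap_iff_fixed π₁).mpr h
    exact hvK y rfl
  simp only [hw]
  refine ⟨fun τ ↦ ?_, ⟨σ, ?_⟩, fun y ↦ ?_, ⟨0, by rw [map_zero, sub_zero]⟩⟩
  · exact WithBot.coe_le_coe.mpr (w.le_map_sub_of_pow_eq_pow hwp hπ₁0 (hconj τ))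
  · exact congrArg WithBot.some (w.map_sub_of_pow_eq_pow hwp hπ₁0 hσ (hconj σ))
  · exact WithBot.coe_le_coe.mpr (w.map_sub_le_left_of_ne (hvK y))

/-- Sharpness of the Ax constant.  `K` is finite totally ramified over `Frac W(k)` with
index `e` (encoded via the valuation `v` on an algebraic closure of `K`), `π` a uniformizer
of `K` and `π_1` a `p`-th root of `π`.  Then `v (σ π_1 - π_1) ≥ v π_1 + 1/(p-1)` for all
`σ ∈ Gal(K̄/K)`, with equality for some `σ`, while `sup_{y ∈ K} v (π_1 - y) = v π_1`
(the supremum being attained, e.g. at `y = 0`).  Hence the constant `1/(p-1)` in Ax's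
theorem cannot be improved. -/
theorem stmt7 (p : ℕ) [Fact p.Prime] (K : Type) [Field K] [CharZero K]
    (e : ℕ) (he : 0 < e)
    (v : AlgebraicClosure K → EReal)
    (hv0 : v 0 = ⊤)
    (hvfin : ∀ x : AlgebraicClosure K, x ≠ 0 → v x ≠ ⊤)
    (hvbot : ∀ x : AlgebraicClosure K, v x ≠ ⊥)
    (hvmul : ∀ x y : AlgebraicClosure K, v (x * y) = v x + v y)
    (hvadd : ∀ x y : AlgebraicClosure K, min (v x) (v y) ≤ v (x + y))
    (hvp : v ((p : ℕ) : AlgebraicClosure K) = 1)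
    (π : K)
    (hπ : v (algebraMap K (AlgebraicClosure K) π) = (((e : ℝ)⁻¹ : ℝ) : EReal))
    (hdisc : ∀ y : K, y ≠ 0 →
      ∃ m : ℤ, v (algebraMap K (AlgebraicClosure K) y) = (((m : ℝ) / e : ℝ) : EReal))
    (π₁ : AlgebraicClosure K) (hπ₁ : π₁ ^ p = algebraMap K (AlgebraicClosure K) π) :
    (∀ σ : AlgebraicClosure K ≃ₐ[K] AlgebraicClosure K,
        v π₁ + ((1 / ((p : ℝ) - 1) : ℝ) : EReal) ≤ v (σ π₁ - π₁)) ∧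
    (∃ σ : AlgebraicClosure K ≃ₐ[K] AlgebraicClosure K,
        v (σ π₁ - π₁) = v π₁ + ((1 / ((p : ℝ) - 1) : ℝ) : EReal)) ∧
    (∀ y : K, v (π₁ - algebraMap K (AlgebraicClosure K) y) ≤ v π₁) ∧
    (∃ y : K, v (π₁ - algebraMap K (AlgebraicClosure K) y) = v π₁) :=
  stmt7_general p K e he v hv0 hvbot hvmul hvadd hvp π hπ hdisc π₁ hπ₁
end
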